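/- arXiv:2406.08683 — 5 statements merged into one kernel-verified Lean document; each statement's English description precedes it below -/
import Mathlib

section
/- Let I be a nonempty finite set of players, and for each i ∈ I let S_i be a nonempty convex subset of a real vector space E_i. Suppose the game (I, S, u) is 'regular', i.e. each utility function has the form u_i(x) = f_i(x_i) + Σ_{j ≠ i} g_{ij}(x_i, x_j) where, for each i, each j ≠ i, and each fixed y_i ∈ S_i, the map x_j ↦ g_{ij}(y_i, x_j) is convex on S_j. Suppose furthermore the game is constant-sum, i.e. there is c ∈ ℝ with Σ_{i ∈ I} u_i(x) = c for every strategy profile x ∈ ∏_j S_j, and that for every i and every profile x the supremum sup_{y_i ∈ S_i} u_i(x[i/y_i]) is finite. Then the exploitability Φ(x) = Σ_{i ∈ I} ( sup_{y_i ∈ S_i} u_i(x[i/y_i]) − u_i(x) ) is a convex function on the convex set ∏_j S_j. -/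
open Set Function

/-- A constant-sum "regular" game (utilities
`u i x = f i (x i) + ∑_{j ≠ i} g i j (x i) (x j)` with each `g i j (y_i)` convex in the
opponent's strategy) has convex exploitability. -/
theorem constant_sum_regular_game_convex_exploitability
    {I : Type*} [Fintype I] [Nonempty I] [DecidableEq I]
    {E : I → Type*} [∀ i, AddCommGroup (E i)] [∀ i, Module ℝ (E i)]
    (S : ∀ i, Set (E i))
    (hSne : ∀ i, (S i).Nonempty) (hSconv : ∀ i, Convex ℝ (S i))
    (u : ∀ _ : I, (∀ j, E j) → ℝ)
    (f : ∀ i, E i → ℝ) (g : ∀ i j : I, E i → E j → ℝ)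
    (hreg : ∀ i, ∀ x : ∀ j, E j,
      u i x = f i (x i) + ∑ j ∈ Finset.univ.erase i, g i j (x i) (x j))
    (hconv : ∀ i j : I, j ≠ i → ∀ y ∈ S i, ConvexOn ℝ (S j) (g i j y))
    (c : ℝ)
    (hconst : ∀ x ∈ Set.univ.pi S, ∑ i, u i x = c)
    (hbdd : ∀ i, ∀ x ∈ Set.univ.pi S,
      BddAbove ((fun y => u i (Function.update x i y)) '' S i)) :
    ConvexOn ℝ (Set.univ.pi S)
      (fun x => ∑ i, (sSup ((fun y => u i (Function.update x i y)) '' S i) - u i x)) := by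
  have hSetConv : Convex ℝ (Set.univ.pi S) := convex_pi fun i _ => hSconv i
  set P : I → (∀ j, E j) → ℝ :=
    fun i v => sSup ((fun y => u i (Function.update v i y)) '' S i) with hP
  refine ⟨hSetConv, ?_⟩
  intro x hx z hz a b ha hb hab
  set w := a • x + b • z with hwdef
  have hw : w ∈ Set.univ.pi S := hSetConv hx hz ha hb hab
  -- key pointwise estimate on suprema
  have key : ∀ i, P i w ≤ a * P i x + b * P i z := by
    intro i
    refine csSup_le ((hSne i).image _) ?_
    rintro _ ⟨y, hy, rfl⟩
    have hyub : ∀ v (hv : v ∈ Set.univ.pi S), u i (Function.update v i y) ≤ P i v :=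
      fun v hv => le_csSup (hbdd i v hv) ⟨y, hy, rfl⟩
    have hval : ∀ v : ∀ j, E j,
        u i (Function.update v i y)
          = f i y + ∑ j ∈ Finset.univ.erase i, g i j y (v j) := by
      intro v
      rw [hreg i]
      congr 1
      · rw [Function.update_self]
      · refine Finset.sum_congr rfl fun j hj => ?_
        rw [Function.update_self, Function.update_of_ne (Finset.ne_of_mem_erase hj)]
    have hsum : u i (Function.update w i y)
        ≤ a * u i (Function.update x i y) + b * u i (Function.update z i y) := by
      rw [hval, hval, hval]
      have hg : ∀ j ∈ Finset.univ.erase i,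
          g i j y (w j) ≤ a * g i j y (x j) + b * g i j y (z j) := by
        intro j hj
        have hji : j ≠ i := Finset.ne_of_mem_erase hj
        have := (hconv i j hji y hy).2 (hx j trivial) (hz j trivial) ha hb hab
        simpa [hwdef, smul_eq_mul] using this
      calc f i y + ∑ j ∈ Finset.univ.erase i, g i j y (w j)
          ≤ f i y + ∑ j ∈ Finset.univ.erase i,
              (a * g i j y (x j) + b * g i j y (z j)) := by
            gcongr with j hj
            exact hg j hj
        _ = a * (f i y + ∑ j ∈ Finset.univ.erase i, g i j y (x j))
            + b * (f i y + ∑ j ∈ Finset.univ.erase i, g i j y (z j)) := by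
            rw [Finset.sum_add_distrib, ← Finset.mul_sum, ← Finset.mul_sum]
            have : f i y = a * f i y + b * f i y := by
              rw [← add_mul, hab, one_mul]
            ring_nf
            nlinarith [hab]
    calc u i (Function.update w i y)
        ≤ a * u i (Function.update x i y) + b * u i (Function.update z i y) := hsum
      _ ≤ a * P i x + b * P i z := by
          gcongr
          · exact hyub x hx
          · exact hyub z hz
  -- put things together using constant-sum
  have hΦ : ∀ v (hv : v ∈ Set.univ.pi S),
      ∑ i, (P i v - u i v) = (∑ i, P i v) - c := by
    intro v hv
    rw [Finset.sum_sub_distrib, hconst v hv]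
  simp only [smul_eq_mul]
  rw [hΦ w hw, hΦ x hx, hΦ z hz]
  have hsum : ∑ i, P i w ≤ a * ∑ i, P i x + b * ∑ i, P i z := by
    calc ∑ i, P i w ≤ ∑ i, (a * P i x + b * P i z) :=
          Finset.sum_le_sum fun i _ => key i
      _ = a * ∑ i, P i x + b * ∑ i, P i z := by
          rw [Finset.sum_add_distrib, ← Finset.mul_sum, ← Finset.mul_sum]
  have hc : a * c + b * c = c := by rw [← add_mul, hab, one_mul]
  have hrw : a * (∑ i, P i x - c) + b * (∑ i, P i z - c)
      = a * ∑ i, P i x + b * ∑ i, P i z - (a * c + b * c) := by ring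
  rw [hrw, hc]
  linarith [hsum]
end

section
/- Let I be a nonempty finite set of players, for each i ∈ I let S_i be a nonempty convex subset of ℝ^{d_i}, and for each ordered pair i ≠ j let A_{ij} be a real d_i × d_j matrix. Consider the polymatrix game with utilities u_i(x) = Σ_{j ≠ i} x_iᵀ A_{ij} x_j. Suppose the game is constant-sum, i.e. there is c ∈ ℝ with Σ_{i ∈ I} u_i(x) = c for every profile x ∈ ∏_j S_j, and that for every i and every profile x the supremum sup_{y_i ∈ S_i} u_i(x[i/y_i]) is finite. Then the exploitability Φ(x) = Σ_{i ∈ I} ( sup_{y_i ∈ S_i} u_i(x[i/y_i]) − u_i(x) ) is a convex function on ∏_j S_j. -/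
/-!
Once player `i`'s own strategy is fixed to `y`, the utility `x ↦ u i (x[i/y])` no longer depends
on `x i` and is linear in the remaining strategies, so the best-response value of each player is a
supremum of linear functions and therefore convex. On the strategy space the constant-sum
condition turns `∑ i, u i x` into the constant `c`, so the exploitability is a sum of convex
functions minus `c`.
-/

open Set Function Matrix

theorem convexOn_finset_sum {𝕜 E β ι : Type*} [Semiring 𝕜] [PartialOrder 𝕜] [AddCommMonoid E]
    [AddCommMonoid β] [PartialOrder β] [IsOrderedAddMonoid β] [SMul 𝕜 E] [Module 𝕜 β]
    {s : Set E} (t : Finset ι) {f : ι → E → β} (hs : Convex 𝕜 s)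
    (hf : ∀ i ∈ t, ConvexOn 𝕜 s (f i)) : ConvexOn 𝕜 s fun x => ∑ i ∈ t, f i x := by
  classical
  induction t using Finset.induction_on with
  | empty => simpa using convexOn_const (0 : β) hs
  | insert a t hat ih =>
    simp only [Finset.sum_insert hat]
    exact (hf a (t.mem_insert_self a)).add (ih fun i hi => hf i (Finset.mem_insert_of_mem hi))

theorem convexOn_csSup_image {E ι : Type*} [AddCommMonoid E] [SMul ℝ E] {s : Set E}
    {T : Set ι} (hT : T.Nonempty) {f : E → ι → ℝ}
    (hf : ∀ y ∈ T, ConvexOn ℝ s fun x => f x y) (hbdd : ∀ x ∈ s, BddAbove (f x '' T)) :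
    ConvexOn ℝ s fun x => sSup (f x '' T) := by
  refine ⟨(hf _ hT.some_mem).1, fun p hp q hq a b ha hb hab => csSup_le (hT.image _) ?_⟩
  rintro _ ⟨y, hy, rfl⟩
  calc f (a • p + b • q) y ≤ a • f p y + b • f q y := (hf y hy).2 hp hq ha hb hab
    _ ≤ a • sSup (f p '' T) + b • sSup (f q '' T) := by
      gcongr
      · exact le_csSup (hbdd p hp) ⟨y, hy, rfl⟩
      · exact le_csSup (hbdd q hq) ⟨y, hy, rfl⟩

theorem convexOn_polymatrix_update {I : Type*} [Fintype I] [DecidableEq I] {d : I → ℕ}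
    (A : ∀ i j : I, Matrix (Fin (d i)) (Fin (d j)) ℝ) (i : I) (y : Fin (d i) → ℝ)
    {s : Set (∀ j, Fin (d j) → ℝ)} (hs : Convex ℝ s) :
    ConvexOn ℝ s fun x => ∑ j ∈ Finset.univ.erase i, update x i y i ⬝ᵥ A i j *ᵥ update x i y j := by
  let L : (∀ j, Fin (d j) → ℝ) →ₗ[ℝ] ℝ :=
    { toFun := fun x => ∑ j ∈ Finset.univ.erase i, y ⬝ᵥ A i j *ᵥ x j
      map_add' := fun x x' => by
        simp only [Pi.add_apply, mulVec_add, dotProduct_add, Finset.sum_add_distrib]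
      map_smul' := fun r x => by
        simp only [Pi.smul_apply, mulVec_smul, dotProduct_smul, smul_eq_mul, Finset.mul_sum,
          RingHom.id_apply] }
  refine (L.convexOn hs).congr fun x _ => Finset.sum_congr rfl fun j hj => ?_
  simp [update_of_ne (Finset.ne_of_mem_erase hj)]

theorem constant_sum_polymatrix_game_convex_exploitability_general
    {I : Type*} [Fintype I] [DecidableEq I]
    (d : I → ℕ)
    (S : ∀ i, Set (Fin (d i) → ℝ))
    (hSne : ∀ i, (S i).Nonempty) (hSconv : ∀ i, Convex ℝ (S i))
    (A : ∀ i j : I, Matrix (Fin (d i)) (Fin (d j)) ℝ)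
    (u : ∀ _ : I, (∀ j, Fin (d j) → ℝ) → ℝ)
    (hu : ∀ i, ∀ x : ∀ j, Fin (d j) → ℝ,
      u i x = ∑ j ∈ Finset.univ.erase i, x i ⬝ᵥ (A i j).mulVec (x j))
    (c : ℝ)
    (hconst : ∀ x ∈ Set.univ.pi S, ∑ i, u i x = c)
    (hbdd : ∀ i, ∀ x ∈ Set.univ.pi S,
      BddAbove ((fun y => u i (Function.update x i y)) '' S i)) :
    ConvexOn ℝ (Set.univ.pi S)
      (fun x => ∑ i, (sSup ((fun y => u i (Function.update x i y)) '' S i) - u i x)) := by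
  have hconv : Convex ℝ (univ.pi S) := convex_pi fun i _ => hSconv i
  have hdev : ∀ i, ∀ y ∈ S i, ConvexOn ℝ (univ.pi S) fun x => u i (update x i y) :=
    fun i y _ => by simpa only [hu] using convexOn_polymatrix_update A i y hconv
  have hbest : ConvexOn ℝ (univ.pi S) fun x => ∑ i, sSup ((fun y => u i (update x i y)) '' S i) :=
    convexOn_finset_sum _ hconv fun i _ => convexOn_csSup_image (hSne i) (hdev i) (hbdd i)
  refine (hbest.add_const (-c)).congr fun x hx => ?_
  rw [Finset.sum_sub_distrib, hconst x hx, sub_eq_add_neg]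
  rfl

/-- A constant-sum polymatrix game
(`u i x = ∑_{j ≠ i} (x i)ᵀ A i j (x j)`) has convex exploitability. -/
theorem constant_sum_polymatrix_game_convex_exploitability
    {I : Type*} [Fintype I] [Nonempty I] [DecidableEq I]
    (d : I → ℕ)
    (S : ∀ i, Set (Fin (d i) → ℝ))
    (hSne : ∀ i, (S i).Nonempty) (hSconv : ∀ i, Convex ℝ (S i))
    (A : ∀ i j : I, Matrix (Fin (d i)) (Fin (d j)) ℝ)
    (u : ∀ _ : I, (∀ j, Fin (d j) → ℝ) → ℝ)
    (hu : ∀ i, ∀ x : ∀ j, Fin (d j) → ℝ,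
      u i x = ∑ j ∈ Finset.univ.erase i, x i ⬝ᵥ (A i j).mulVec (x j))
    (c : ℝ)
    (hconst : ∀ x ∈ Set.univ.pi S, ∑ i, u i x = c)
    (hbdd : ∀ i, ∀ x ∈ Set.univ.pi S,
      BddAbove ((fun y => u i (Function.update x i y)) '' S i)) :
    ConvexOn ℝ (Set.univ.pi S)
      (fun x => ∑ i, (sSup ((fun y => u i (Function.update x i y)) '' S i) - u i x)) :=
  constant_sum_polymatrix_game_convex_exploitability_general d S hSne hSconv A u hu c hconst hbdd
end

section
/- Let I be a nonempty finite set of players, for each i ∈ I let S_i be a nonempty convex subset of ℝ^{d_i}, and for each ordered pair i ≠ j let A_{ij} be a real d_i × d_j matrix. Consider the polymatrix game with utilities u_i(x) = Σ_{j ≠ i} x_iᵀ A_{ij} x_j, and suppose it is pairwise constant-sum: for each unordered pair {i, j} with i ≠ j there is a constant c_{ij} ∈ ℝ such that x_iᵀ A_{ij} x_j + x_jᵀ A_{ji} x_i = c_{ij} for all x_i ∈ S_i, x_j ∈ S_j. Suppose also that for every i and every profile x the supremum sup_{y_i ∈ S_i} u_i(x[i/y_i]) is finite. Then the exploitability Φ(x)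 = Σ_{i ∈ I} ( sup_{y_i ∈ S_i} u_i(x[i/y_i]) − u_i(x) ) is a convex function on ∏_j S_j. -/
open Set Function Matrix

/-- A pairwise constant-sum polymatrix game has convex exploitability. -/
theorem pairwise_constant_sum_polymatrix_game_convex_exploitability
    {I : Type*} [Fintype I] [Nonempty I] [DecidableEq I]
    (d : I → ℕ)
    (S : ∀ i, Set (Fin (d i) → ℝ))
    (hSne : ∀ i, (S i).Nonempty) (hSconv : ∀ i, Convex ℝ (S i))
    (A : ∀ i j : I, Matrix (Fin (d i)) (Fin (d j)) ℝ)
    (u : ∀ _ : I, (∀ j, Fin (d j) → ℝ) → ℝ)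
    (hu : ∀ i, ∀ x : ∀ j, Fin (d j) → ℝ,
      u i x = ∑ j ∈ Finset.univ.erase i, x i ⬝ᵥ (A i j).mulVec (x j))
    (cpair : I → I → ℝ)
    (hpair : ∀ i j : I, i ≠ j → ∀ xi ∈ S i, ∀ xj ∈ S j,
      xi ⬝ᵥ (A i j).mulVec xj + xj ⬝ᵥ (A j i).mulVec xi = cpair i j)
    (hbdd : ∀ i, ∀ x ∈ Set.univ.pi S,
      BddAbove ((fun y => u i (Function.update x i y)) '' S i)) :
    ConvexOn ℝ (Set.univ.pi S)
      (fun x => ∑ i, (sSup ((fun y => u i (Function.update x i y)) '' S i) - u i x)) := by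
  have hsetconv : Convex ℝ (Set.univ.pi S) := convex_pi (fun i _ => hSconv i)
  set K : ℝ := ∑ i, ∑ j ∈ Finset.univ.erase i, cpair i j with hK
  -- total utility is constant on the domain
  have hsum : ∀ x ∈ Set.univ.pi S, ∑ i, u i x = K / 2 := by
    intro x hx
    have hx' : ∀ i, x i ∈ S i := fun i => hx i trivial
    have hswap : ∑ i, ∑ j ∈ Finset.univ.erase i, (x j ⬝ᵥ (A j i).mulVec (x i))
        = ∑ i, ∑ j ∈ Finset.univ.erase i, (x i ⬝ᵥ (A i j).mulVec (x j)) := by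
      refine Finset.sum_comm' (fun a b => ?_)
      simp [Finset.mem_erase, ne_comm, and_comm]
    have h2 : (∑ i, u i x) + (∑ i, u i x) = K := by
      conv_lhs =>
        rw [show (∑ i, u i x) = ∑ i, ∑ j ∈ Finset.univ.erase i,
          (x i ⬝ᵥ (A i j).mulVec (x j)) from Finset.sum_congr rfl (fun i _ => hu i x)]
      conv_lhs => rw [← hswap]
      conv_lhs => rw [hswap]
      nth_rewrite 2 [← hswap]
      rw [← Finset.sum_add_distrib, hK]
      refine Finset.sum_congr rfl (fun i _ => ?_)
      rw [← Finset.sum_add_distrib]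
      refine Finset.sum_congr rfl (fun j hj => ?_)
      have hij : i ≠ j := fun h => (Finset.mem_erase.mp hj).1 h.symm
      exact hpair i j hij (x i) (hx' i) (x j) (hx' j)
    linarith
  constructor
  · exact hsetconv
  · intro x hx z hz a b ha hb hab
    have hw : a • x + b • z ∈ Set.univ.pi S := hsetconv hx hz ha hb hab
    -- linearity of u i (update · i y) in the other coordinates
    have hlin : ∀ i, ∀ y, u i (Function.update (a • x + b • z) i y)
        = a * u i (Function.update x i y) + b * u i (Function.update z i y) := by
      intro i y
      rw [hu, hu, hu, Finset.mul_sum, Finset.mul_sum, ← Finset.sum_add_distrib]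
      refine Finset.sum_congr rfl (fun j hj => ?_)
      have hij : j ≠ i := (Finset.mem_erase.mp hj).1
      rw [Function.update_self, Function.update_self, Function.update_self,
        Function.update_of_ne hij, Function.update_of_ne hij, Function.update_of_ne hij]
      have : (a • x + b • z) j = a • x j + b • z j := rfl
      rw [this, Matrix.mulVec_add, Matrix.mulVec_smul, Matrix.mulVec_smul,
        dotProduct_add, dotProduct_smul, dotProduct_smul]
      simp [smul_eq_mul]
    -- sup terms are convex
    have hsupb : ∀ i, sSup ((fun y => u i (Function.update (a • x + b • z) i y)) '' S i)
        ≤ a * sSup ((fun y => u i (Function.update x i y)) '' S i)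
          + b * sSup ((fun y => u i (Function.update z i y)) '' S i) := by
      intro i
      refine csSup_le ((hSne i).image _) ?_
      rintro _ ⟨y, hy, rfl⟩
      dsimp only
      rw [hlin i y]
      have h1 : u i (Function.update x i y)
          ≤ sSup ((fun y => u i (Function.update x i y)) '' S i) :=
        le_csSup (hbdd i x hx) (Set.mem_image_of_mem _ hy)
      have h2 : u i (Function.update z i y)
          ≤ sSup ((fun y => u i (Function.update z i y)) '' S i) :=
        le_csSup (hbdd i z hz) (Set.mem_image_of_mem _ hy)
      have := mul_le_mul_of_nonneg_left h1 ha
      have := mul_le_mul_of_nonneg_left h2 hb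
      linarith
    simp only [Finset.sum_sub_distrib]
    rw [hsum _ hw, hsum _ hx, hsum _ hz, smul_eq_mul, smul_eq_mul]
    have hS : ∑ i, sSup ((fun y => u i (Function.update (a • x + b • z) i y)) '' S i)
        ≤ a * (∑ i, sSup ((fun y => u i (Function.update x i y)) '' S i))
          + b * (∑ i, sSup ((fun y => u i (Function.update z i y)) '' S i)) := by
      rw [Finset.mul_sum, Finset.mul_sum, ← Finset.sum_add_distrib]
      exact Finset.sum_le_sum (fun i _ => hsupb i)
    have : a * (K / 2) + b * (K / 2) = K / 2 := by
      rw [← add_mul, hab, one_mul]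
    linarith [hS]
end

section
/- Let n ≥ 1 and x : Fin n → ℝ. Let z_1, …, z_n be independent random variables each distributed according to the standard Gumbel distribution, i.e. the probability measure on ℝ with density t ↦ exp(−t − exp(−t)) with respect to Lebesgue measure. Then for every index i, softmax(x)_i equals the probability that x_i + z_i > x_j + z_j for all j ≠ i; that is, the product measure of the set { z ∈ ℝ^n : ∀ j ≠ i, x_i + z_i > x_j + z_j } equals exp(x_i) / Σ_j exp(x_j). -/
/-!
Conditioning on `z i = t`, the other coordinates must satisfy `z j < x i + t - x j`; since the
Gumbel distribution function is `exp (-exp (-a))`, this happens with probability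
`exp (-T * exp (-t))`, where `T = ∑ j ≠ i, exp (x j - x i)`. Integrating against the Gumbel
density gives `∫ exp (-t - (1 + T) * exp (-t)) dt = 1 / (1 + T)`, because
`t ↦ exp (-S * exp (-t)) / S` is an antiderivative of `exp (-t - S * exp (-t))`;
and `1 / (1 + T)` is the softmax.
-/

open MeasureTheory Real Set Filter Finset Topology

section DerivNonneg

variable {g g' : ℝ → ℝ} {a : ℝ}

theorem intervalIntegral_norm_eq_sub_of_hasDerivAt_of_nonneg (hderiv : ∀ x, HasDerivAt g (g' x) x)
    (hg' : ∀ x, 0 ≤ g' x) (c d : ℝ) : ∫ x in c..d, ‖g' x‖ = g d - g c := by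
  simp_rw [Real.norm_of_nonneg (hg' _)]
  exact intervalIntegral.integral_eq_sub_of_hasDerivAt (fun x _ => hderiv x)
    (intervalIntegral.intervalIntegrable_deriv_of_nonneg
      (fun x _ => (hderiv x).continuousAt.continuousWithinAt) (fun x _ => hderiv x)
      (fun x _ => hg' x))

theorem integrableOn_Iic_deriv_of_nonneg (hderiv : ∀ x, HasDerivAt g (g' x) x)
    (hg' : ∀ x, 0 ≤ g' x) (hbot : Tendsto g atBot (𝓝 a)) (c : ℝ) :
    IntegrableOn g' (Iic c) := by
  refine integrableOn_Iic_of_intervalIntegral_norm_tendsto (g c - a) c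
    (fun d => intervalIntegral.integrableOn_deriv_of_nonneg
      (fun x _ => (hderiv x).continuousAt.continuousWithinAt) (fun x _ => hderiv x)
      (fun x _ => hg' x)) tendsto_id ?_
  simp_rw [intervalIntegral_norm_eq_sub_of_hasDerivAt_of_nonneg hderiv hg']
  exact tendsto_const_nhds.sub hbot

theorem integrable_deriv_of_nonneg {b : ℝ} (hderiv : ∀ x, HasDerivAt g (g' x) x)
    (hg' : ∀ x, 0 ≤ g' x) (hbot : Tendsto g atBot (𝓝 a)) (htop : Tendsto g atTop (𝓝 b)) :
    Integrable g' := by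
  rw [← integrableOn_univ, ← Iic_union_Ioi (a := 0), integrableOn_union]
  exact ⟨integrableOn_Iic_deriv_of_nonneg hderiv hg' hbot 0,
    integrableOn_Ioi_deriv_of_nonneg' (fun x _ => hderiv x) (fun x _ => hg' x) htop⟩

theorem setLIntegral_Iio_ofReal_deriv_of_nonneg (hderiv : ∀ x, HasDerivAt g (g' x) x)
    (hg' : ∀ x, 0 ≤ g' x) (hbot : Tendsto g atBot (𝓝 a)) (c : ℝ) :
    ∫⁻ x in Iio c, ENNReal.ofReal (g' x) = ENNReal.ofReal (g c - a) := by
  have hint := integrableOn_Iic_deriv_of_nonneg hderiv hg' hbot c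
  rw [setLIntegral_congr Iio_ae_eq_Iic, ← ofReal_integral_eq_lintegral_ofReal hint
    (ae_of_all _ hg'), integral_Iic_of_hasDerivAt_of_tendsto' (fun x _ => hderiv x) hint hbot]

theorem lintegral_ofReal_deriv_of_nonneg {b : ℝ} (hderiv : ∀ x, HasDerivAt g (g' x) x)
    (hg' : ∀ x, 0 ≤ g' x) (hbot : Tendsto g atBot (𝓝 a)) (htop : Tendsto g atTop (𝓝 b)) :
    ∫⁻ x, ENNReal.ofReal (g' x) = ENNReal.ofReal (b - a) := by
  have hint := integrable_deriv_of_nonneg hderiv hg' hbot htop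
  rw [← ofReal_integral_eq_lintegral_ofReal hint (ae_of_all _ hg'),
    integral_of_hasDerivAt_of_tendsto hderiv hint hbot htop]

end DerivNonneg

section GumbelIntegral

variable {S : ℝ}

theorem hasDerivAt_exp_neg_mul_exp_neg_div (hS : S ≠ 0) (t : ℝ) :
    HasDerivAt (fun t => exp (-S * exp (-t)) / S) (exp (-t - S * exp (-t))) t := by
  have h := (((hasDerivAt_neg t).exp.const_mul (-S)).exp).div_const S
  refine h.congr_deriv ?_
  rw [sub_eq_add_neg, exp_add, ← neg_mul]
  field_simp

theorem tendsto_exp_neg_mul_exp_neg_div_atBot (hS : 0 < S) :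
    Tendsto (fun t => exp (-S * exp (-t)) / S) atBot (𝓝 0) := by
  have h : Tendsto (fun t => -S * exp (-t)) atBot atBot :=
    tendsto_neg_atTop_atBot.comp
      ((tendsto_exp_atTop.comp tendsto_neg_atBot_atTop).const_mul_atTop hS) |>.congr
      fun t => by simp
  simpa using (tendsto_exp_atBot.comp h).div_const S

theorem tendsto_exp_neg_mul_exp_neg_div_atTop (S : ℝ) :
    Tendsto (fun t => exp (-S * exp (-t)) / S) atTop (𝓝 (1 / S)) := by
  have h : Tendsto (fun t => -S * exp (-t)) atTop (𝓝 0) := by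
    simpa using (tendsto_exp_atBot.comp tendsto_neg_atTop_atBot).const_mul (-S)
  simpa using ((continuous_exp.tendsto 0).comp h).div_const S

theorem setLIntegral_Iio_exp_neg_sub_mul_exp_neg (hS : 0 < S) (a : ℝ) :
    ∫⁻ t in Iio a, ENNReal.ofReal (exp (-t - S * exp (-t)))
      = ENNReal.ofReal (exp (-S * exp (-a)) / S) := by
  simpa using setLIntegral_Iio_ofReal_deriv_of_nonneg (hasDerivAt_exp_neg_mul_exp_neg_div hS.ne')
    (fun t => (exp_pos _).le) (tendsto_exp_neg_mul_exp_neg_div_atBot hS) a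

theorem lintegral_exp_neg_sub_mul_exp_neg (hS : 0 < S) :
    ∫⁻ t, ENNReal.ofReal (exp (-t - S * exp (-t))) = ENNReal.ofReal (1 / S) := by
  simpa using lintegral_ofReal_deriv_of_nonneg (hasDerivAt_exp_neg_mul_exp_neg_div hS.ne')
    (fun t => (exp_pos _).le) (tendsto_exp_neg_mul_exp_neg_div_atBot hS)
    (tendsto_exp_neg_mul_exp_neg_div_atTop S)

end GumbelIntegral

theorem pi_setOf_forall_ne_add_lt_add {n : ℕ} (μ : Fin n → Measure ℝ) [∀ j, SigmaFinite (μ j)]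
    (x : Fin n → ℝ) (i : Fin n) :
    Measure.pi μ {z | ∀ j, j ≠ i → x j + z j < x i + z i}
      = ∫⁻ t, ∏ j ∈ {i}ᶜ, μ j (Iio (x i + t - x j)) ∂μ i := by
  cases n with
  | zero => exact i.elim0
  | succ m =>
  set s : Set (ℝ × (Fin m → ℝ)) := {p | ∀ k, x (i.succAbove k) + p.2 k < x i + p.1}
  have hs : MeasurableSet s := by
    simp only [s, ofPred_forall]
    exact .iInter fun k => measurableSet_lt (by fun_prop) (by fun_prop)
  have hpre : {z : Fin (m + 1) → ℝ | ∀ j, j ≠ i → x j + z j < x i + z i}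
      = MeasurableEquiv.piFinSuccAbove (fun _ => ℝ) i ⁻¹' s := by
    ext z
    simp [s, i.forall_iff_succAbove, MeasurableEquiv.piFinSuccAbove_apply, Fin.removeNth]
  have hslice (t : ℝ) : Prod.mk t ⁻¹' s = univ.pi fun k => Iio (x i + t - x (i.succAbove k)) := by
    ext w
    simp [s, lt_sub_iff_add_lt']
  rw [hpre, (measurePreserving_piFinSuccAbove μ i).measure_preimage_equiv, Measure.prod_apply hs]
  simp only [hslice, Measure.pi_pi]
  rw [← Fin.image_succAbove_univ]
  simp_rw [Finset.prod_image fun _ _ _ _ h => i.succAbove_right_injective h]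

noncomputable def gumbelMeasure : Measure ℝ :=
  volume.withDensity fun t => ENNReal.ofReal (exp (-t - exp (-t)))

instance : IsProbabilityMeasure gumbelMeasure where
  measure_univ := by
    rw [gumbelMeasure, withDensity_apply _ .univ, Measure.restrict_univ]
    simpa using lintegral_exp_neg_sub_mul_exp_neg one_pos

theorem gumbelMeasure_Iio (a : ℝ) : gumbelMeasure (Iio a) = ENNReal.ofReal (exp (-exp (-a))) := by
  rw [gumbelMeasure, withDensity_apply _ measurableSet_Iio]
  simpa using setLIntegral_Iio_exp_neg_sub_mul_exp_neg one_pos a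

theorem lintegral_exp_neg_mul_exp_neg_gumbelMeasure {T : ℝ} (hT : 0 ≤ T) :
    ∫⁻ t, ENNReal.ofReal (exp (-T * exp (-t))) ∂gumbelMeasure = ENNReal.ofReal (1 / (1 + T)) := by
  rw [gumbelMeasure, lintegral_withDensity_eq_lintegral_mul _ (by fun_prop) (by fun_prop),
    ← lintegral_exp_neg_sub_mul_exp_neg (by positivity : 0 < 1 + T)]
  congr 1 with t
  rw [Pi.mul_apply, ← ENNReal.ofReal_mul (exp_pos _).le, ← exp_add]
  ring_nf

theorem exp_div_sum_exp_eq_one_div {n : ℕ} (x : Fin n → ℝ) (i : Fin n) :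
    exp (x i) / ∑ j, exp (x j) = 1 / (1 + ∑ j ∈ {i}ᶜ, exp (x j - x i)) := by
  rw [← exp_zero, ← sub_self (x i), ← Fintype.sum_eq_add_sum_compl i (fun j => exp (x j - x i))]
  simp_rw [exp_sub, ← Finset.sum_div]
  field_simp

theorem gumbel_max_softmax_general
    (n : ℕ) (x : Fin n → ℝ)
    (gumbel : Measure ℝ)
    (hgumbel : gumbel
      = volume.withDensity (fun t => ENNReal.ofReal (Real.exp (-t - Real.exp (-t)))))
    (i : Fin n) :
    (Measure.pi fun _ : Fin n => gumbel)
        {z : Fin n → ℝ | ∀ j, j ≠ i → x j + z j < x i + z i}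
      = ENNReal.ofReal (Real.exp (x i) / ∑ j, Real.exp (x j)) := by
  rw [← gumbelMeasure] at hgumbel
  subst hgumbel
  have hprod (t : ℝ) : ∏ j ∈ {i}ᶜ, gumbelMeasure (Iio (x i + t - x j))
      = ENNReal.ofReal (exp (-(∑ j ∈ {i}ᶜ, exp (x j - x i)) * exp (-t))) := by
    simp only [gumbelMeasure_Iio, ← ENNReal.ofReal_prod_of_nonneg fun _ _ => (exp_pos _).le,
      ← exp_sum, neg_mul, Finset.sum_mul, ← exp_add, ← Finset.sum_neg_distrib]
    congr 3 with j
    ring_nf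
  rw [pi_setOf_forall_ne_add_lt_add, lintegral_congr fun t => hprod t,
    lintegral_exp_neg_mul_exp_neg_gumbelMeasure (by positivity), exp_div_sum_exp_eq_one_div]

/-- Gumbel-max trick: if `z j` are i.i.d. standard Gumbel, then
`softmax x i` equals the probability that `x i + z i` beats all other `x j + z j`. -/
theorem gumbel_max_softmax
    (n : ℕ) (hn : 1 ≤ n) (x : Fin n → ℝ)
    (gumbel : Measure ℝ)
    (hgumbel : gumbel
      = volume.withDensity (fun t => ENNReal.ofReal (Real.exp (-t - Real.exp (-t)))))
    (i : Fin n) :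
    (Measure.pi fun _ : Fin n => gumbel)
        {z : Fin n → ℝ | ∀ j, j ≠ i → x j + z j < x i + z i}
      = ENNReal.ofReal (Real.exp (x i) / ∑ j, Real.exp (x j)) :=
  gumbel_max_softmax_general n x gumbel hgumbel i
end

section
/- Let μ be the Borel probability measure on [0, 1] whose cumulative distribution function is F(t) = (4/π) arctan(√t) for t ∈ [0, 1] (i.e. μ([0, t]) = (4/π) arctan(√t)), and let M(x, y) = (1 + x)(1 + y)(1 − xy)/(1 + xy)² be the Glicksberg–Gross utility kernel on [0, 1]². Then μ is an equalizing strategy with value 4/π: for every y ∈ [0, 1], ∫_0^1 M(x, y) dμ(x) = 4/π. -/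
/-!
Substituting `x = u²` turns `μ` into the measure with density `4 / (π (1 + u²))` on `[0, 1]`,
since `∫₀^√t 4 / (π (1 + u²)) du = (4/π) arctan √t`. After this substitution the factor `1 + x`
of the kernel cancels the density's denominator, and what remains,
`(4/π) (1 + y) (1 - y u²) / (1 + y u²)²`, is the derivative of `(4/π) (1 + y) u / (1 + y u²)`,
which increases by exactly `4/π` over `[0, 1]`.
-/

open MeasureTheory Set Real
open scoped ENNReal

theorem MeasureTheory.Measure.eq_of_Iic_eq_on_Icc {α : Type*} [TopologicalSpace α]
    {m : MeasurableSpace α} [SecondCountableTopology α] [LinearOrder α] [OrderTopology α]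
    [BorelSpace α] {μ ν : Measure α} [IsProbabilityMeasure μ] [IsProbabilityMeasure ν] {a b : α}
    (h : ∀ t ∈ Icc a b, μ (Iic t) = ν (Iic t)) (ha : ν (Iic a) = 0) (hb : ν (Iic b) = 1) :
    μ = ν := by
  have hab : a ≤ b := by
    by_contra! hba
    have := measure_mono (μ := ν) (Iic_subset_Iic.2 hba.le)
    simp [ha, hb] at this
  have hzero : ∀ {ρ : Measure α}, ρ (Iic a) = 0 → ∀ t ≤ a, ρ (Iic t) = 0 := fun h0 t ht =>
    measure_mono_null (Iic_subset_Iic.2 ht) h0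
  have hone : ∀ {ρ : Measure α} [IsProbabilityMeasure ρ], ρ (Iic b) = 1 → ∀ t, b ≤ t →
      ρ (Iic t) = 1 := fun h1 t ht =>
    le_antisymm prob_le_one (h1 ▸ measure_mono (Iic_subset_Iic.2 ht))
  refine Measure.ext_of_Iic μ ν fun t => ?_
  rcases le_total t a with hta | hat
  · rw [hzero ((h a ⟨le_rfl, hab⟩).trans ha) t hta, hzero ha t hta]
  rcases le_total t b with htb | hbt
  · exact h t ⟨hat, htb⟩
  · rw [hone ((h b ⟨hab, le_rfl⟩).trans hb) t hbt, hone hb t hbt]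

lemma four_div_pi_mul_arctan_one : 4 / π * arctan 1 = 1 := by
  rw [arctan_one, div_mul_div_cancel₀ pi_ne_zero, div_self four_ne_zero]

lemma integral_Icc_four_div_pi_div_one_add_sq {s : ℝ} (hs : 0 ≤ s) :
    ∫ u in Icc 0 s, 4 / π / (1 + u ^ 2) = 4 / π * arctan s := by
  rw [integral_Icc_eq_integral_Ioc, ← intervalIntegral.integral_of_le hs]
  simp_rw [div_eq_mul_one_div (4 / π), intervalIntegral.integral_const_mul,
    integral_one_div_one_add_sq, arctan_zero, sub_zero]

noncomputable def cauchyOnUnit : Measure ℝ :=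
  (volume.restrict (Icc 0 1)).withDensity fun u => ENNReal.ofReal (4 / π / (1 + u ^ 2))

noncomputable def arctanSqrtMeasure : Measure ℝ :=
  cauchyOnUnit.map (· ^ 2)

lemma cauchyOnUnit_apply {A : Set ℝ} (hA : MeasurableSet A) :
    cauchyOnUnit A = ENNReal.ofReal (∫ u in A ∩ Icc 0 1, 4 / π / (1 + u ^ 2)) := by
  rw [cauchyOnUnit, withDensity_apply _ hA, Measure.restrict_restrict hA,
    ofReal_integral_eq_lintegral_ofReal]
  · exact ((continuous_const.div (by fun_prop) fun u => by positivity).integrableOn_Icc).mono_set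
      inter_subset_right
  · exact Filter.Eventually.of_forall fun u => by positivity

instance : IsProbabilityMeasure cauchyOnUnit := by
  constructor
  rw [cauchyOnUnit_apply MeasurableSet.univ, univ_inter,
    integral_Icc_four_div_pi_div_one_add_sq zero_le_one, four_div_pi_mul_arctan_one,
    ENNReal.ofReal_one]

instance : IsProbabilityMeasure arctanSqrtMeasure :=
  Measure.isProbabilityMeasure_map (by fun_prop)

lemma arctanSqrtMeasure_Iic {t : ℝ} (ht : t ∈ Icc (0 : ℝ) 1) :
    arctanSqrtMeasure (Iic t) = ENNReal.ofReal (4 / π * arctan (√t)) := by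
  have hpre : (· ^ 2) ⁻¹' Iic t ∩ Icc 0 1 = Icc (0 : ℝ) √t := by
    ext u
    simp only [mem_inter_iff, mem_preimage, mem_Iic, mem_Icc]
    constructor
    · rintro ⟨hut, hu0, -⟩
      exact ⟨hu0, le_sqrt_of_sq_le hut⟩
    · rintro ⟨hu0, hus⟩
      exact ⟨(le_sqrt hu0 ht.1).1 hus, hu0, hus.trans (sqrt_le_one.2 ht.2)⟩
  rw [arctanSqrtMeasure, Measure.map_apply (by fun_prop) measurableSet_Iic,
    cauchyOnUnit_apply (measurableSet_Iic.preimage (by fun_prop)), hpre,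
    integral_Icc_four_div_pi_div_one_add_sq (sqrt_nonneg t)]

lemma eq_arctanSqrtMeasure_of_Iic {μ : Measure ℝ} [IsProbabilityMeasure μ]
    (h : ∀ t ∈ Icc (0 : ℝ) 1, μ (Iic t) = ENNReal.ofReal (4 / π * arctan (√t))) :
    μ = arctanSqrtMeasure := by
  refine Measure.eq_of_Iic_eq_on_Icc
    (fun t ht => (h t ht).trans (arctanSqrtMeasure_Iic ht).symm) ?_ ?_
  · simp [arctanSqrtMeasure_Iic]
  · rw [arctanSqrtMeasure_Iic (right_mem_Icc.2 zero_le_one), sqrt_one,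
      four_div_pi_mul_arctan_one, ENNReal.ofReal_one]

lemma integral_arctanSqrtMeasure {f : ℝ → ℝ} (hf : Measurable f) :
    ∫ x, f x ∂arctanSqrtMeasure = ∫ u in Icc 0 1, 4 / π / (1 + u ^ 2) * f (u ^ 2) := by
  rw [arctanSqrtMeasure, integral_map (by fun_prop) hf.aestronglyMeasurable, cauchyOnUnit,
    integral_withDensity_eq_integral_toReal_smul (by fun_prop)
      (Filter.Eventually.of_forall fun _ => ENNReal.ofReal_lt_top)]
  refine setIntegral_congr_fun measurableSet_Icc fun u _ => ?_
  rw [ENNReal.toReal_ofReal (by positivity), smul_eq_mul]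

lemma hasDerivAt_div_one_add_mul_sq {y u : ℝ} (h : 1 + y * u ^ 2 ≠ 0) :
    HasDerivAt (fun v => v / (1 + y * v ^ 2)) ((1 - y * u ^ 2) / (1 + y * u ^ 2) ^ 2) u := by
  refine ((hasDerivAt_id' u).div (((hasDerivAt_pow 2 u).const_mul y).const_add 1) h).congr_deriv
    ?_
  field_simp
  ring

lemma integral_one_sub_mul_sq_div_sq {y : ℝ} (hy : -1 < y) :
    ∫ u in (0 : ℝ)..1, (1 - y * u ^ 2) / (1 + y * u ^ 2) ^ 2 = 1 / (1 + y) := by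
  have hpos : ∀ u ∈ uIcc (0 : ℝ) 1, 0 < 1 + y * u ^ 2 := by
    intro u hu
    rw [uIcc_of_le zero_le_one] at hu
    rcases le_total 0 y with hy0 | hy0
    · positivity
    · nlinarith [mul_le_mul_of_nonpos_left (pow_le_one₀ (n := 2) hu.1 hu.2) hy0]
  rw [intervalIntegral.integral_eq_sub_of_hasDerivAt
    (fun u hu => hasDerivAt_div_one_add_mul_sq (hpos u hu).ne')]
  · simp
  · exact (ContinuousOn.div (by fun_prop) (by fun_prop)
      fun u hu => (pow_pos (hpos u hu) 2).ne').intervalIntegrable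

lemma integral_glicksbergGrossKernel_arctanSqrtMeasure {y : ℝ} (hy : -1 < y) :
    ∫ x, (1 + x) * (1 + y) * (1 - x * y) / (1 + x * y) ^ 2 ∂arctanSqrtMeasure = 4 / π := by
  have hdensity : ∀ u : ℝ,
      4 / π / (1 + u ^ 2) * ((1 + u ^ 2) * (1 + y) * (1 - u ^ 2 * y) / (1 + u ^ 2 * y) ^ 2)
        = 4 / π * (1 + y) * ((1 - y * u ^ 2) / (1 + y * u ^ 2) ^ 2) := fun u => by
    have : 1 + u ^ 2 ≠ 0 := by positivity
    field_simp
  rw [integral_arctanSqrtMeasure (by fun_prop)]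
  simp_rw [hdensity]
  rw [integral_const_mul, integral_Icc_eq_integral_Ioc,
    ← intervalIntegral.integral_of_le zero_le_one, integral_one_sub_mul_sq_div_sq hy]
  have : 1 + y ≠ 0 := by linarith
  field_simp

/-- The measure `μ` on `[0,1]` with CDF `F(t) = (4/π) arctan √t` is an
equalizing strategy of the Glicksberg–Gross game with value `4/π`: for every `y ∈ [0,1]`,
`∫ M(x,y) dμ(x) = 4/π`, where `M(x,y) = (1+x)(1+y)(1-xy)/(1+xy)²`. -/
theorem glicksberg_gross_equalizing_strategy
    (μ : Measure ℝ) [IsProbabilityMeasure μ]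
    (hcdf : ∀ t ∈ Icc (0:ℝ) 1,
      μ (Iic t) = ENNReal.ofReal (4 / π * arctan (Real.sqrt t))) :
    ∀ y ∈ Icc (0:ℝ) 1,
      ∫ x, (1 + x) * (1 + y) * (1 - x * y) / (1 + x * y)^2 ∂μ = 4 / π := by
  intro y hy
  rw [eq_arctanSqrtMeasure_of_Iic hcdf]
  exact integral_glicksbergGrossKernel_arctanSqrtMeasure (by linarith [hy.1])
end
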